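/- arXiv:2301.08090 — 6 statements merged into one kernel-verified Lean document; each statement's English description precedes it below -/
import Mathlib

section
/- For every instance of indivisible chores with two agents whose additive cost functions are normalized (c_1(M) = c_2(M) = 1) and weights w_1, w_2 > 0 with w_1 + w_2 = 1, there exists a WEF1 allocation X with social cost sc(X) ≤ ((4 + α)/4) · opt(I), where α = max{w_1, w_2}/min{w_1, w_2} and opt(I) is the minimum social cost over all allocations. -/
open Finset
open scoped ENNReal

set_option maxHeartbeats 1000000

/-- `X` is an allocation: an `n`-partition of the items into (possibly empty) bundles. -/
def IsAllocation {N M : Type*} [Fintype N] [Fintype M] [DecidableEq M]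
    (X : N → Finset M) : Prop :=
  (∀ i j : N, i ≠ j → Disjoint (X i) (X j)) ∧ Finset.univ.biUnion X = Finset.univ

/-- Weighted envy-freeness up to one item, for chores. -/
def IsWEF1 {N M : Type*} [DecidableEq M] (w : N → ℝ) (c : N → M → ℝ)
    (X : N → Finset M) : Prop :=
  ∀ i j : N, X i = ∅ ∨ ∃ e ∈ X i,
    (∑ e' ∈ X i \ {e}, c i e') / w i ≤ (∑ e' ∈ X j, c i e') / w j


private lemma adj_contra {x y sa tf sg tg : ℝ} (hx : 0 < x) (hy : 0 < y)
    (h1 : x * tf < y * sa) (h2 : y * sg < x * tg)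
    (h3 : sa * tg ≤ tf * sg) (htf : 0 ≤ tf) (hsg : 0 ≤ sg) : False := by
  have h4 : 0 ≤ x * tf := mul_nonneg hx.le htf
  have h5 : 0 ≤ y * sg := mul_nonneg hy.le hsg
  have h6 : (x * tf) * (y * sg) < (y * sa) * (x * tg) := mul_lt_mul'' h1 h2 h4 h5
  have h7 : 0 < x * y := mul_pos hx hy
  nlinarith [mul_le_mul_of_nonneg_left h3 h7.le]

private lemma key_ineq {x y s t d : ℝ} (hx : 0 < x) (hy : 0 < y) (hxy : x + y = 1)
    (hs0 : 0 < s) (hs1 : s ≤ 1) (h1 : d * s ≤ t * (1 - s)) (h2 : t * y ≤ s - x) :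
    d ≤ max (x / y) (y / x) / 4 * s := by
  set A := max (x / y) (y / x) with hA
  have hy1 : y = 1 - x := by linarith
  subst hy1
  have hq : 4 * ((s - x) * (1 - s)) ≤ A * (1 - x) * s ^ 2 := by
    rcases le_total x (1 - x) with hle | hle
    · have hm : A = (1 - x) / x :=
        max_eq_right (le_trans ((div_le_one hy).mpr hle) ((one_le_div hx).mpr hle))
      rw [hm]
      have hq' : 4 * x * ((s - x) * (1 - s)) ≤ (1 - x) ^ 2 * s ^ 2 := by
        nlinarith [sq_nonneg ((1 + x) * s - 2 * x)]
      have he : (1 - x) / x * (1 - x) * s ^ 2 = ((1 - x) ^ 2 * s ^ 2) / x := by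
        field_simp
      rw [he, le_div_iff₀ hx]
      linarith
    · have hm : A = x / (1 - x) :=
        max_eq_left (le_trans ((div_le_one hx).mpr hle) ((one_le_div hy).mpr hle))
      rw [hm]
      have he : x / (1 - x) * (1 - x) * s ^ 2 = x * s ^ 2 :=
        by rw [div_mul_cancel₀ x hy.ne']
      rw [he]
      have h2x : 1 ≤ 2 * x := by linarith
      have h9 : (x + 4) * (x * s ^ 2 - 4 * ((s - x) * (1 - s)))
          = ((x + 4) * s - 2 * (1 + x)) ^ 2 + 4 * (2 * x - 1) := by ring
      have h10 : 0 ≤ (x + 4) * (x * s ^ 2 - 4 * ((s - x) * (1 - s))) := by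
        rw [h9]; nlinarith [sq_nonneg ((x + 4) * s - 2 * (1 + x))]
      nlinarith
  have ht : t ≤ (s - x) / (1 - x) := (le_div_iff₀ hy).mpr h2
  have h3 : d * s ≤ ((s - x) / (1 - x)) * (1 - s) :=
    le_trans h1 (mul_le_mul_of_nonneg_right ht (by linarith))
  have h4 : ((s - x) / (1 - x)) * (1 - s) ≤ A * s ^ 2 / 4 := by
    rw [div_mul_eq_mul_div, div_le_div_iff₀ hy (by norm_num : (0:ℝ) < 4)]
    nlinarith
  have h5 : d * s ≤ (A / 4 * s) * s := by
    have : (A / 4 * s) * s = A * s ^ 2 / 4 := by ring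
    rw [this]; exact le_trans h3 h4
  exact le_of_mul_le_mul_right h5 hs0

private lemma cross_sum {F G : ℕ → ℝ} (A B : Finset ℕ)
    (h : ∀ i ∈ A, ∀ j ∈ B, F i * G j ≤ F j * G i) :
    (∑ i ∈ A, F i) * (∑ j ∈ B, G j) ≤ (∑ j ∈ B, F j) * (∑ i ∈ A, G i) := by
  rw [Finset.sum_mul_sum]
  have he : (∑ j ∈ B, F j) * (∑ i ∈ A, G i) = ∑ i ∈ A, ∑ j ∈ B, F j * G i := by
    rw [Finset.sum_mul_sum]; rw [Finset.sum_comm]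
  rw [he]
  exact Finset.sum_le_sum fun i hi => Finset.sum_le_sum fun j hj => h i hi j hj

private lemma core' (m kst : ℕ) (F G : ℕ → ℝ) (x y : ℝ)
    (hx : 0 < x) (hy : 0 < y) (hxy : x + y = 1)
    (hF : ∀ n, 0 ≤ F n) (hG : ∀ n, 0 ≤ G n)
    (hFsum : ∑ i ∈ range m, F i = 1) (hGsum : ∑ i ∈ range m, G i = 1)
    (hcross : ∀ i j, i ≤ j → j < m → F i * G j ≤ F j * G i)
    (hkst : kst ≤ m) :
    ∃ k ≤ m,
      (k = 0 ∨ ∃ i < k, y * ((∑ n ∈ range k, F n) - F i) ≤ x * ∑ n ∈ Ico k m, F n) ∧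
      (k = m ∨ ∃ i, (k ≤ i ∧ i < m) ∧
        x * ((∑ n ∈ Ico k m, G n) - G i) ≤ y * ∑ n ∈ range k, G n) ∧
      (∑ n ∈ range k, F n) + (∑ n ∈ Ico k m, G n) ≤
        (1 + max (x / y) (y / x) / 4) * ((∑ n ∈ range kst, F n) + (∑ n ∈ Ico kst m, G n)) := by
  classical
  have hαnn : 0 ≤ max (x / y) (y / x) := le_trans (div_pos hx hy).le (le_max_left _ _)
  have hsum_range_nonneg : ∀ k, 0 ≤ ∑ n ∈ range k, F n :=
    fun k => Finset.sum_nonneg fun i _ => hF i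
  have hsum_Ico_nonnegF : ∀ a b, 0 ≤ ∑ n ∈ Ico a b, F n :=
    fun a b => Finset.sum_nonneg fun i _ => hF i
  have hsum_Ico_nonnegG : ∀ a b, 0 ≤ ∑ n ∈ Ico a b, G n :=
    fun a b => Finset.sum_nonneg fun i _ => hG i
  have hsum_range_nonnegG : ∀ k, 0 ≤ ∑ n ∈ range k, G n :=
    fun k => Finset.sum_nonneg fun i _ => hG i
  -- adjacency lemma
  have hADJ : ∀ k, k + 1 ≤ m →
      ¬ (k + 1 = 0 ∨ ∃ i < k + 1,
          y * ((∑ n ∈ range (k+1), F n) - F i) ≤ x * ∑ n ∈ Ico (k+1) m, F n) →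
      ¬ (k = m ∨ ∃ i, (k ≤ i ∧ i < m) ∧
          x * ((∑ n ∈ Ico k m, G n) - G i) ≤ y * ∑ n ∈ range k, G n) → False := by
    intro k hkm h1 h2
    obtain ⟨-, hall1⟩ := not_or.mp h1
    obtain ⟨-, hall2⟩ := not_or.mp h2
    push_neg at hall1 hall2
    have hI : x * (∑ n ∈ Ico (k+1) m, F n) < y * (∑ n ∈ range k, F n) := by
      have h := hall1 k (Nat.lt_succ_self k)
      rw [Finset.sum_range_succ] at h
      have he : (∑ n ∈ range k, F n) + F k - F k = ∑ n ∈ range k, F n := by ring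
      rwa [he] at h
    have hII : y * (∑ n ∈ range k, G n) < x * (∑ n ∈ Ico (k+1) m, G n) := by
      have h := hall2 k ⟨le_refl k, by omega⟩
      rw [Finset.sum_eq_sum_Ico_succ_bot (by omega : k < m)] at h
      have he : G k + (∑ n ∈ Ico (k+1) m, G n) - G k = ∑ n ∈ Ico (k+1) m, G n := by ring
      rwa [he] at h
    have hcr : (∑ n ∈ range k, F n) * (∑ n ∈ Ico (k+1) m, G n)
        ≤ (∑ n ∈ Ico (k+1) m, F n) * (∑ n ∈ range k, G n) := by
      apply cross_sum
      intro i hi j hj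
      rw [Finset.mem_range] at hi
      rw [Finset.mem_Ico] at hj
      exact hcross i j (by omega) hj.2
    exact adj_contra hx hy hI hII hcr (hsum_Ico_nonnegF _ _) (hsum_range_nonnegG _)
  by_cases hA1 : kst = 0 ∨ ∃ i < kst,
      y * ((∑ n ∈ range kst, F n) - F i) ≤ x * ∑ n ∈ Ico kst m, F n
  · by_cases hA2 : kst = m ∨ ∃ i, (kst ≤ i ∧ i < m) ∧
        x * ((∑ n ∈ Ico kst m, G n) - G i) ≤ y * ∑ n ∈ range kst, G n
    · -- Case A
      refine ⟨kst, hkst, hA1, hA2, ?_⟩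
      have h0 : 0 ≤ (∑ n ∈ range kst, F n) + (∑ n ∈ Ico kst m, G n) :=
        add_nonneg (hsum_range_nonneg _) (hsum_Ico_nonnegG _ _)
      nlinarith
    · -- Case C : agent 2 violates at kst
      obtain ⟨hne2, hall2⟩ := not_or.mp hA2
      push_neg at hall2
      have hkstm : kst < m := lt_of_le_of_ne hkst hne2
      have hexd : ∃ d : ℕ, (kst + d = m ∨ ∃ i, (kst + d ≤ i ∧ i < m) ∧
          x * ((∑ n ∈ Ico (kst + d) m, G n) - G i) ≤ y * ∑ n ∈ range (kst + d), G n) :=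
        ⟨m - kst, Or.inl (by omega)⟩
      have hex2 : ∃ k2, kst < k2 ∧ k2 ≤ m ∧
          (k2 = m ∨ ∃ i, (k2 ≤ i ∧ i < m) ∧
            x * ((∑ n ∈ Ico k2 m, G n) - G i) ≤ y * ∑ n ∈ range k2, G n) ∧
          ¬ ((k2 - 1) = m ∨ ∃ i, (k2 - 1 ≤ i ∧ i < m) ∧
            x * ((∑ n ∈ Ico (k2 - 1) m, G n) - G i) ≤ y * ∑ n ∈ range (k2 - 1), G n) := by
        have hspec := Nat.find_spec hexd
        have hlem : Nat.find hexd ≤ m - kst := Nat.find_min' hexd (Or.inl (by omega))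
        have hpos : 0 < Nat.find hexd := by
          rcases Nat.eq_zero_or_pos (Nat.find hexd) with h0 | h0
          · exfalso; rw [h0, Nat.add_zero] at hspec; exact hA2 hspec
          · exact h0
        have hmin := Nat.find_min hexd (show Nat.find hexd - 1 < Nat.find hexd by omega)
        refine ⟨kst + Nat.find hexd, by omega, by omega, hspec, ?_⟩
        have he : kst + (Nat.find hexd - 1) = kst + Nat.find hexd - 1 := by omega
        rwa [he] at hmin
      obtain ⟨k2, hk2gt, hk2le, hk2P, hnP2p⟩ := hex2
      have hP1k2 : k2 = 0 ∨ ∃ i < k2,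
          y * ((∑ n ∈ range k2, F n) - F i) ≤ x * ∑ n ∈ Ico k2 m, F n := by
        by_contra hc
        have he : (k2 - 1) + 1 = k2 := by omega
        exact hADJ (k2 - 1) (by omega) (by rwa [he]) hnP2p
      refine ⟨k2, hk2le, hP1k2, hk2P, ?_⟩
      -- cost bound, mirrored
      obtain ⟨-, hallp⟩ := not_or.mp hnP2p
      push_neg at hallp
      set a := ∑ n ∈ Ico k2 m, G n with ha
      set t := ∑ n ∈ Ico kst k2, G n with htd
      set FT := ∑ n ∈ Ico kst k2, F n with hFT
      set FA := ∑ n ∈ Ico k2 m, F n with hFA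
      set SF := ∑ n ∈ range kst, F n with hSF
      have hSFnn : 0 ≤ SF := hsum_range_nonneg kst
      have htnn : 0 ≤ t := hsum_Ico_nonnegG kst k2
      have hann : 0 ≤ a := hsum_Ico_nonnegG k2 m
      have hcr : FT * a ≤ FA * t := by
        apply cross_sum
        intro i hi j hj
        rw [Finset.mem_Ico] at hi hj
        exact hcross i j (by omega) hj.2
      have hsplitF : SF + FT + FA = 1 := by
        rw [hSF, hFT, hFA, ← hFsum]
        rw [← Finset.sum_range_add_sum_Ico F hkst]
        rw [← Finset.sum_Ico_consecutive F (by omega : kst ≤ k2) hk2le]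
        try ring
      have hFAeq : FA = 1 - SF - FT := by linarith
      have hcr2 : FT * a ≤ (1 - SF - FT) * t := by rw [← hFAeq]; exact hcr
      have hDs : (FT - t) * (t + a) ≤ t * (1 - (t + a)) := by
        nlinarith [mul_nonneg hSFnn htnn]
      have he2 : (∑ n ∈ Ico (k2-1) m, G n) = G (k2-1) + a := by
        rw [ha]
        have h := Finset.sum_eq_sum_Ico_succ_bot (by omega : k2 - 1 < m) G
        rwa [show k2 - 1 + 1 = k2 by omega] at h
      have hstep : y * (∑ n ∈ range (k2 - 1), G n) < x * a := by
        have h := hallp (k2 - 1) ⟨le_refl _, by omega⟩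
        rw [he2] at h
        have he3 : G (k2-1) + a - G (k2-1) = a := by ring
        rwa [he3] at h
      have hSGsplit : (∑ n ∈ range (k2-1), G n) = 1 - (G (k2-1) + a) := by
        have h1 : (∑ n ∈ range (k2-1), G n) + (∑ n ∈ Ico (k2-1) m, G n) = 1 := by
          rw [← hGsum]; exact Finset.sum_range_add_sum_Ico G (by omega)
        rw [he2] at h1
        linarith
      have haa : x * a + y * a = a := by rw [← add_mul, hxy, one_mul]
      have halb : y * (1 - G (k2-1)) < a := by
        rw [hSGsplit] at hstep
        linarith
      have hεt : G (k2-1) ≤ t := by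
        rw [htd]
        exact Finset.single_le_sum (f := G) (fun i _ => hG i)
          (Finset.mem_Ico.mpr ⟨by omega, by omega⟩)
      have hty : t * x ≤ (t + a) - y := by
        have h1 : y * G (k2-1) ≤ y * t := mul_le_mul_of_nonneg_left hεt hy.le
        nlinarith
      have hta : t + a = ∑ n ∈ Ico kst m, G n := by
        rw [htd, ha]; exact Finset.sum_Ico_consecutive G (by omega) hk2le
      have hs1 : t + a ≤ 1 := by
        rw [hta, ← hGsum]
        exact Finset.sum_le_sum_of_subset_of_nonneg
          (fun i hi => Finset.mem_range.mpr (Finset.mem_Ico.mp hi).2) (fun i _ _ => hG i)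
      have hs0 : 0 < t + a := by
        have h := hall2 kst ⟨le_refl _, hkstm⟩
        have hGk : 0 ≤ G kst := hG kst
        have h0 : 0 ≤ y * (∑ n ∈ range kst, G n) :=
          mul_nonneg hy.le (hsum_range_nonnegG kst)
        rw [← hta] at h
        nlinarith
      have hkey := key_ineq hy hx (by linarith) hs0 hs1 hDs hty
      rw [max_comm (y/x) (x/y)] at hkey
      have hsck2 : (∑ n ∈ range k2, F n) = SF + FT := by
        rw [hSF, hFT]; exact (Finset.sum_range_add_sum_Ico F (by omega : kst ≤ k2)).symm
      have hTGkst : (∑ n ∈ Ico kst m, G n) = t + a := hta.symm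
      rw [hsck2, hTGkst]
      nlinarith [mul_nonneg hαnn hSFnn]
  · -- Case B : agent 1 violates at kst
    obtain ⟨hne1, hall1⟩ := not_or.mp hA1
    push_neg at hall1
    have hkst0 : 0 < kst := Nat.pos_of_ne_zero hne1
    have hex1 : ∃ k1, k1 < kst ∧
        (k1 = 0 ∨ ∃ i < k1, y * ((∑ n ∈ range k1, F n) - F i) ≤ x * ∑ n ∈ Ico k1 m, F n) ∧
        ¬ (k1 + 1 = 0 ∨ ∃ i < k1 + 1,
          y * ((∑ n ∈ range (k1+1), F n) - F i) ≤ x * ∑ n ∈ Ico (k1+1) m, F n) := by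
      set P : ℕ → Prop := fun k => (k = 0 ∨ ∃ i < k,
        y * ((∑ n ∈ range k, F n) - F i) ≤ x * ∑ n ∈ Ico k m, F n) with hP
      have h0 : P 0 := Or.inl rfl
      have hspec : P (Nat.findGreatest P kst) := Nat.findGreatest_spec (Nat.zero_le kst) h0
      have hle : Nat.findGreatest P kst ≤ kst := Nat.findGreatest_le kst
      have hlt : Nat.findGreatest P kst < kst := by
        rcases lt_or_eq_of_le hle with h | h
        · exact h
        · exact absurd (h ▸ hspec) hA1
      have hgr : ¬ P (Nat.findGreatest P kst + 1) :=
        Nat.findGreatest_is_greatest (Nat.lt_succ_self _) (by omega)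
      exact ⟨Nat.findGreatest P kst, hlt, hspec, hgr⟩
    obtain ⟨k1, hk1lt, hk1P, hnP1s⟩ := hex1
    have hP2k1 : k1 = m ∨ ∃ i, (k1 ≤ i ∧ i < m) ∧
        x * ((∑ n ∈ Ico k1 m, G n) - G i) ≤ y * ∑ n ∈ range k1, G n := by
      by_contra hc
      exact hADJ k1 (by omega) hnP1s hc
    refine ⟨k1, by omega, hk1P, hP2k1, ?_⟩
    -- cost bound
    obtain ⟨-, halls⟩ := not_or.mp hnP1s
    push_neg at halls
    set a := ∑ n ∈ range k1, F n with ha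
    set t := ∑ n ∈ Ico k1 kst, F n with htd
    set GT := ∑ n ∈ Ico k1 kst, G n with hGT
    set GA := ∑ n ∈ range k1, G n with hGA
    set TG2 := ∑ n ∈ Ico kst m, G n with hTG2
    have htnn : 0 ≤ t := hsum_Ico_nonnegF k1 kst
    have hTG2nn : 0 ≤ TG2 := hsum_Ico_nonnegG kst m
    have hcr : a * GT ≤ t * GA := by
      apply cross_sum
      intro i hi j hj
      rw [Finset.mem_range] at hi
      rw [Finset.mem_Ico] at hj
      exact hcross i j (by omega) (by omega)
    have hsplitG : GA + GT + TG2 = 1 := by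
      rw [hGA, hGT, hTG2, ← hGsum]
      rw [← Finset.sum_range_add_sum_Ico G hkst]
      rw [← Finset.sum_range_add_sum_Ico G (by omega : k1 ≤ kst)]
      try ring
    have hGAeq : GA = 1 - GT - TG2 := by linarith
    have hcr2 : a * GT ≤ t * (1 - GT - TG2) := by rw [← hGAeq]; exact hcr
    have hDs : (GT - t) * (a + t) ≤ t * (1 - (a + t)) := by
      nlinarith [mul_nonneg htnn hTG2nn]
    have hstep : x * (∑ n ∈ Ico (k1+1) m, F n) < y * a := by
      have h := halls k1 (Nat.lt_succ_self k1)
      rw [Finset.sum_range_succ] at h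
      have he : (∑ n ∈ range k1, F n) + F k1 - F k1 = a := by rw [ha]; ring
      rwa [he] at h
    have hTFsplit : (∑ n ∈ Ico (k1+1) m, F n) = 1 - (a + F k1) := by
      have h1 : (∑ n ∈ range (k1+1), F n) + (∑ n ∈ Ico (k1+1) m, F n) = 1 := by
        rw [← hFsum]; exact Finset.sum_range_add_sum_Ico F (by omega)
      rw [Finset.sum_range_succ] at h1
      rw [ha]; linarith
    have haa : x * a + y * a = a := by rw [← add_mul, hxy, one_mul]
    have halb : x * (1 - F k1) < a := by
      rw [hTFsplit] at hstep
      linarith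
    have hεt : F k1 ≤ t := by
      rw [htd]
      exact Finset.single_le_sum (f := F) (fun i _ => hF i)
        (Finset.mem_Ico.mpr ⟨le_refl _, hk1lt⟩)
    have hty : t * y ≤ (a + t) - x := by
      have h1 : x * F k1 ≤ x * t := mul_le_mul_of_nonneg_left hεt hx.le
      nlinarith
    have hsplitF2 : a + t = ∑ n ∈ range kst, F n := by
      rw [ha, htd]; exact Finset.sum_range_add_sum_Ico F (by omega)
    have hs1 : a + t ≤ 1 := by
      rw [hsplitF2, ← hFsum]
      exact Finset.sum_le_sum_of_subset_of_nonneg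
        (Finset.range_subset_range.mpr hkst) (fun i _ _ => hF i)
    have hs0 : 0 < a + t := by
      have h := hall1 0 hkst0
      have h0 : 0 ≤ x * (∑ n ∈ Ico kst m, F n) :=
        mul_nonneg hx.le (hsum_Ico_nonnegF kst m)
      have hF0 : 0 ≤ F 0 := hF 0
      rw [hsplitF2]
      nlinarith
    have hkey := key_ineq hx hy hxy hs0 hs1 hDs hty
    have hTGk1 : (∑ n ∈ Ico k1 m, G n) = GT + TG2 := by
      rw [hGT, hTG2]; exact (Finset.sum_Ico_consecutive G (by omega) hkst).symm
    rw [hTGk1, ← hsplitF2]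
    nlinarith [mul_nonneg hαnn hTG2nn]

private lemma crossk {p q u v : ℝ} (hp : 0 ≤ p) (hq : 0 ≤ q) (hu : 0 ≤ u) (hv : 0 ≤ v)
    (h : ENNReal.ofReal p / ENNReal.ofReal q ≤ ENNReal.ofReal u / ENNReal.ofReal v) :
    p * v ≤ u * q := by
  rcases eq_or_lt_of_le hv with hv0 | hv0
  · rw [← hv0, mul_zero]; exact mul_nonneg hu hq
  rcases eq_or_lt_of_le hq with hq0 | hq0
  · by_cases hP : ENNReal.ofReal p = 0
    · have hp0 : p ≤ 0 := ENNReal.ofReal_eq_zero.mp hP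
      have : p = 0 := le_antisymm hp0 hp
      rw [this, zero_mul]; exact mul_nonneg hu hq
    · exfalso
      rw [← hq0, ENNReal.ofReal_zero, ENNReal.div_zero hP] at h
      have htop : ENNReal.ofReal u / ENNReal.ofReal v = ⊤ := top_le_iff.mp h
      rcases ENNReal.div_eq_top.mp htop with ⟨-, hv'⟩ | ⟨hu', -⟩
      · exact absurd hv' (by simp [ENNReal.ofReal_eq_zero]; linarith)
      · exact absurd hu' (ENNReal.ofReal_ne_top)
  · have hQ0 : ENNReal.ofReal q ≠ 0 := by simp [ENNReal.ofReal_eq_zero]; linarith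
    have hQt : ENNReal.ofReal q ≠ ⊤ := ENNReal.ofReal_ne_top
    have hV0 : ENNReal.ofReal v ≠ 0 := by simp [ENNReal.ofReal_eq_zero]; linarith
    have hVt : ENNReal.ofReal v ≠ ⊤ := ENNReal.ofReal_ne_top
    have h2 : ENNReal.ofReal p ≤ ENNReal.ofReal u / ENNReal.ofReal v * ENNReal.ofReal q :=
      (ENNReal.div_le_iff_le_mul (Or.inl hQ0) (Or.inl hQt)).mp h
    have h3 : ENNReal.ofReal p * ENNReal.ofReal v
        ≤ ENNReal.ofReal u / ENNReal.ofReal v * ENNReal.ofReal q * ENNReal.ofReal v :=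
      mul_le_mul_left h2 _
    have h4 : ENNReal.ofReal u / ENNReal.ofReal v * ENNReal.ofReal q * ENNReal.ofReal v
        = ENNReal.ofReal u * ENNReal.ofReal q := by
      rw [mul_right_comm, ENNReal.div_mul_cancel hV0 hVt]
    rw [h4, ← ENNReal.ofReal_mul hp, ← ENNReal.ofReal_mul hu] at h3
    exact (ENNReal.ofReal_le_ofReal_iff (mul_nonneg hu hq)).mp h3

private lemma class_lt {p q : ℝ} (hp : 0 ≤ p) (hq : 0 ≤ q)
    (h : ENNReal.ofReal p / ENNReal.ofReal q < 1) : p ≤ q := by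
  rcases eq_or_lt_of_le hq with hq0 | hq0
  · by_cases hP : ENNReal.ofReal p = 0
    · have : p ≤ 0 := ENNReal.ofReal_eq_zero.mp hP
      linarith
    · exfalso
      rw [← hq0, ENNReal.ofReal_zero, ENNReal.div_zero hP] at h
      simp at h
  · have hQ0 : ENNReal.ofReal q ≠ 0 := by simp [ENNReal.ofReal_eq_zero]; linarith
    have hQt : ENNReal.ofReal q ≠ ⊤ := ENNReal.ofReal_ne_top
    have h2 : ENNReal.ofReal p < 1 * ENNReal.ofReal q :=
      (ENNReal.div_lt_iff (Or.inl hQ0) (Or.inl hQt)).mp h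
    rw [one_mul] at h2
    exact le_of_lt ((ENNReal.ofReal_lt_ofReal_iff hq0).mp h2)

private lemma class_ge {p q : ℝ} (hp : 0 ≤ p) (hq : 0 ≤ q)
    (h : ¬ (ENNReal.ofReal p / ENNReal.ofReal q < 1)) : q ≤ p := by
  push_neg at h
  rcases eq_or_lt_of_le hq with hq0 | hq0
  · linarith
  · have hQ0 : ENNReal.ofReal q ≠ 0 := by simp [ENNReal.ofReal_eq_zero]; linarith
    have hQt : ENNReal.ofReal q ≠ ⊤ := ENNReal.ofReal_ne_top
    have h2 : 1 * ENNReal.ofReal q ≤ ENNReal.ofReal p :=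
      (ENNReal.le_div_iff_mul_le (Or.inl hQ0) (Or.inl hQt)).mp h
    rw [one_mul] at h2
    exact (ENNReal.ofReal_le_ofReal_iff hp).mp h2

private lemma fin_initial_seg {n : ℕ} (S : Finset (Fin n))
    (hdc : ∀ i j : Fin n, i ≤ j → j ∈ S → i ∈ S) (i : Fin n) :
    i ∈ S ↔ (i : ℕ) < S.card := by
  constructor
  · intro hi
    have h1 : Finset.Iic i ⊆ S := fun j hj => hdc j i (Finset.mem_Iic.mp hj) hi
    have h2 := Finset.card_le_card h1
    rw [Fin.card_Iic] at h2
    omega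
  · intro hi
    by_contra hni
    have h1 : S ⊆ Finset.Iio i := fun j hj =>
      Finset.mem_Iio.mpr (lt_of_not_ge fun hle => hni (hdc i j hle hj))
    have h2 := Finset.card_le_card h1
    rw [Fin.card_Iio] at h2
    omega

private lemma max_div_min {x y : ℝ} (hx : 0 < x) (hy : 0 < y) :
    max x y / min x y = max (x / y) (y / x) := by
  rcases le_total x y with h | h
  · rw [max_eq_right h, min_eq_left h,
      max_eq_right (le_trans ((div_le_one hy).mpr h) ((one_le_div hx).mpr h))]
  · rw [max_eq_left h, min_eq_right h,
      max_eq_left (le_trans ((div_le_one hx).mpr h) ((one_le_div hy).mpr h))]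

/-- for two agents with normalized costs, there is a WEF1 allocation whose
social cost is at most `(4 + α)/4` times the optimal social cost, where
`α = max{w₁,w₂}/min{w₁,w₂}`. -/
theorem price_of_WEF1_upper_bound
    {M : Type*} [Fintype M] [DecidableEq M]
    (w : Fin 2 → ℝ) (hw : ∀ i, 0 < w i) (hwsum : ∑ i, w i = 1)
    (c : Fin 2 → M → ℝ) (hc : ∀ i e, 0 ≤ c i e)
    (hnorm : ∀ i, ∑ e, c i e = 1) :
    ∃ X : Fin 2 → Finset M, IsAllocation X ∧ IsWEF1 w c X ∧
      ∀ Y : Fin 2 → Finset M, IsAllocation Y →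
        (∑ i, ∑ e ∈ X i, c i e) ≤
          ((4 + max (w 0) (w 1) / min (w 0) (w 1)) / 4) * (∑ i, ∑ e ∈ Y i, c i e) := by
  classical
  set n := Fintype.card M with hn
  set e0 : M ≃ Fin n := Fintype.equivFin M with he0
  set κ : M → ℝ≥0∞ := fun a => ENNReal.ofReal (c 0 a) / ENNReal.ofReal (c 1 a) with hκ
  set g : Fin n ≃ M := (Tuple.sort (κ ∘ e0.symm)).trans e0.symm with hg
  have hmono : ∀ i j : Fin n, i ≤ j → κ (g i) ≤ κ (g j) := by
    intro i j hij
    exact Tuple.monotone_sort (κ ∘ e0.symm) hij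
  set F : ℕ → ℝ := fun i => if h : i < n then c 0 (g ⟨i, h⟩) else 0 with hF
  set G : ℕ → ℝ := fun i => if h : i < n then c 1 (g ⟨i, h⟩) else 0 with hG
  -- generic sum transport lemmas
  have hsum_univ : ∀ h : M → ℝ,
      (∑ i ∈ range n, (fun i => if hh : i < n then h (g ⟨i, hh⟩) else 0) i) = ∑ a, h a := by
    intro h
    rw [← Fin.sum_univ_eq_sum_range (fun i => if hh : i < n then h (g ⟨i, hh⟩) else 0) n]
    have h1 : (∑ i : Fin n, (fun i => if hh : i < n then h (g ⟨i, hh⟩) else 0) (i : ℕ))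
        = ∑ i : Fin n, h (g i) :=
      Finset.sum_congr rfl (fun i _ => by
        show (if hh : (i : ℕ) < n then h (g ⟨(i : ℕ), hh⟩) else 0) = h (g i)
        rw [dif_pos i.isLt])
    rw [h1]
    exact Equiv.sum_comp g h
  have hsum_take : ∀ (h : M → ℝ) (k : ℕ), k ≤ n →
      (∑ a ∈ univ.filter (fun a => ((g.symm a : Fin n) : ℕ) < k), h a)
        = ∑ i ∈ range k, (fun i => if hh : i < n then h (g ⟨i, hh⟩) else 0) i := by
    intro h k hk
    have h1 : (∑ a ∈ univ.filter (fun a => ((g.symm a : Fin n) : ℕ) < k), h a)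
        = ∑ i ∈ univ.filter (fun i : Fin n => (i : ℕ) < k), h (g i) := by
      apply Finset.sum_equiv g.symm
      · intro a
        simp
      · intro a _
        rw [Equiv.apply_symm_apply]
    rw [h1, Finset.sum_filter]
    have h3 : (∑ i : Fin n, if (i : ℕ) < k then h (g i) else 0)
        = ∑ i ∈ range n, (fun i => if i < k then
            (if hh : i < n then h (g ⟨i, hh⟩) else 0) else 0) i := by
      rw [← Fin.sum_univ_eq_sum_range (fun i => if i < k then
            (if hh : i < n then h (g ⟨i, hh⟩) else 0) else 0) n]
      apply Finset.sum_congr rfl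
      intro i _
      by_cases hik : (i : ℕ) < k
      · rw [if_pos hik, if_pos hik, dif_pos i.isLt]
      · rw [if_neg hik, if_neg hik]
    rw [h3, ← Finset.sum_filter]
    congr 1
    ext j
    simp only [Finset.mem_filter, Finset.mem_range]
    omega
  have hsum_drop : ∀ (h : M → ℝ) (k : ℕ), k ≤ n →
      (∑ a ∈ (univ.filter (fun a => ((g.symm a : Fin n) : ℕ) < k))ᶜ, h a)
        = ∑ i ∈ Ico k n, (fun i => if hh : i < n then h (g ⟨i, hh⟩) else 0) i := by
    intro h k hk
    have h1 := Finset.sum_add_sum_compl (univ.filter (fun a => ((g.symm a : Fin n) : ℕ) < k)) h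
    have h2 := hsum_take h k hk
    have h3 := hsum_univ h
    have h4 := Finset.sum_range_add_sum_Ico
      (fun i => if hh : i < n then h (g ⟨i, hh⟩) else 0) hk
    linarith
  -- the optimal threshold
  set S : Finset (Fin n) := univ.filter (fun i => κ (g i) < 1) with hS
  set kh := S.card with hkh
  have hdc : ∀ i j : Fin n, i ≤ j → j ∈ S → i ∈ S := by
    intro i j hij hj
    rw [hS, Finset.mem_filter] at hj ⊢
    exact ⟨Finset.mem_univ _, lt_of_le_of_lt (hmono i j hij) hj.2⟩
  have hseg : ∀ i : Fin n, i ∈ S ↔ (i : ℕ) < kh := fin_initial_seg S hdc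
  have hkhn : kh ≤ n := by
    rw [hkh]
    calc S.card ≤ (univ : Finset (Fin n)).card := Finset.card_le_card (Finset.filter_subset _ _)
    _ = n := by rw [Finset.card_univ, Fintype.card_fin]
  have hcl1 : ∀ i : ℕ, i < kh → F i ≤ G i := by
    intro i hik
    have hin : i < n := lt_of_lt_of_le hik hkhn
    have hmem : (⟨i, hin⟩ : Fin n) ∈ S := (hseg ⟨i, hin⟩).mpr hik
    rw [hS, Finset.mem_filter] at hmem
    have hκlt := hmem.2
    rw [hκ] at hκlt
    simp only [hF, hG, dif_pos hin]
    exact class_lt (hc 0 _) (hc 1 _) hκlt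
  have hcl2 : ∀ i : ℕ, kh ≤ i → i < n → G i ≤ F i := by
    intro i hki hin
    have hκge : ¬ κ (g ⟨i, hin⟩) < 1 := by
      intro hlt
      have hmem : (⟨i, hin⟩ : Fin n) ∈ S := by
        rw [hS, Finset.mem_filter]; exact ⟨Finset.mem_univ _, hlt⟩
      have h2 : i < kh := (hseg ⟨i, hin⟩).mp hmem
      omega
    rw [hκ] at hκge
    simp only [hF, hG, dif_pos hin]
    exact class_ge (hc 0 _) (hc 1 _) hκge
  have hcrossFG : ∀ i j, i ≤ j → j < n → F i * G j ≤ F j * G i := by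
    intro i j hij hj
    have hi : i < n := lt_of_le_of_lt hij hj
    simp only [hF, hG, dif_pos hi, dif_pos hj]
    have hκ' : κ (g ⟨i, hi⟩) ≤ κ (g ⟨j, hj⟩) := hmono _ _ hij
    rw [hκ] at hκ'
    exact crossk (hc 0 _) (hc 1 _) (hc 0 _) (hc 1 _) hκ'
  have hw01 : w 0 + w 1 = 1 := (Fin.sum_univ_two w).symm.trans hwsum
  have hFnn : ∀ i, 0 ≤ F i := by
    intro i
    simp only [hF]
    by_cases h : i < n
    · rw [dif_pos h]; exact hc 0 _
    · rw [dif_neg h]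
  have hGnn : ∀ i, 0 ≤ G i := by
    intro i
    simp only [hG]
    by_cases h : i < n
    · rw [dif_pos h]; exact hc 1 _
    · rw [dif_neg h]
  have hFsum' : ∑ i ∈ range n, F i = 1 := (hsum_univ (c 0)).trans (hnorm 0)
  have hGsum' : ∑ i ∈ range n, G i = 1 := (hsum_univ (c 1)).trans (hnorm 1)
  obtain ⟨k, hkn, hP1, hP2, hcost⟩ :=
    core' n kh F G (w 0) (w 1) (hw 0) (hw 1) hw01 hFnn hGnn hFsum' hGsum' hcrossFG hkhn
  set A : Finset M := univ.filter (fun a => ((g.symm a : Fin n) : ℕ) < k) with hA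
  have hsA : ∀ h : M → ℝ, (∑ a ∈ A, h a) = ∑ i ∈ range k,
      (fun i => if hh : i < n then h (g ⟨i, hh⟩) else 0) i := fun h => hsum_take h k hkn
  have hsAc : ∀ h : M → ℝ, (∑ a ∈ Aᶜ, h a) = ∑ i ∈ Ico k n,
      (fun i => if hh : i < n then h (g ⟨i, hh⟩) else 0) i := fun h => hsum_drop h k hkn
  refine ⟨![A, Aᶜ], ⟨?_, ?_⟩, ?_, ?_⟩
  · -- disjoint
    intro i j hij
    fin_cases i <;> fin_cases j
    · exact absurd rfl hij
    · simp only [Matrix.cons_val_zero, Matrix.cons_val_one, Matrix.head_cons]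
      exact disjoint_compl_right
    · simp only [Matrix.cons_val_zero, Matrix.cons_val_one, Matrix.head_cons]
      exact disjoint_compl_left
    · exact absurd rfl hij
  · -- biUnion
    ext a
    simp only [Finset.mem_biUnion, Finset.mem_univ, iff_true, true_and]
    by_cases h : a ∈ A
    · exact ⟨0, by simpa using h⟩
    · exact ⟨1, by simpa using h⟩
  · -- WEF1
    intro i j
    fin_cases i <;> fin_cases j <;>
      simp only [Fin.zero_eta, Fin.mk_one, Matrix.cons_val_zero, Matrix.cons_val_one,
        Matrix.head_cons]
    · -- (0,0)
      rcases Finset.eq_empty_or_nonempty A with h | ⟨e, he⟩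
      · left; exact h
      · right
        refine ⟨e, he, ?_⟩
        have hsub : ∑ e' ∈ A \ {e}, c 0 e' ≤ ∑ e' ∈ A, c 0 e' :=
          Finset.sum_le_sum_of_subset_of_nonneg Finset.sdiff_subset (fun x _ _ => hc 0 x)
        rw [div_le_div_iff₀ (hw 0) (hw 0)]
        exact mul_le_mul_of_nonneg_right hsub (hw 0).le
    · -- (0,1)
      rcases hP1 with hk0 | ⟨i0, hi0k, hineq⟩
      · left
        rw [hA, Finset.eq_empty_iff_forall_notMem]
        intro a ha
        rw [Finset.mem_filter, hk0] at ha
        omega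
      · right
        have hi0n : i0 < n := lt_of_lt_of_le hi0k hkn
        refine ⟨g ⟨i0, hi0n⟩, ?_, ?_⟩
        · rw [hA, Finset.mem_filter]
          refine ⟨Finset.mem_univ _, ?_⟩
          rw [Equiv.symm_apply_apply]
          exact hi0k
        · have hmem : g ⟨i0, hi0n⟩ ∈ A := by
            rw [hA, Finset.mem_filter]
            exact ⟨Finset.mem_univ _, by rw [Equiv.symm_apply_apply]; exact hi0k⟩
          have hrem : ∑ e' ∈ A \ {g ⟨i0, hi0n⟩}, c 0 e'
              = (∑ i ∈ range k, F i) - F i0 := by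
            rw [← Finset.erase_eq, Finset.sum_erase_eq_sub hmem]
            rw [hsA (c 0)]
            have : c 0 (g ⟨i0, hi0n⟩) = F i0 := by simp only [hF, dif_pos hi0n]
            rw [this]
          have hrem2 : ∑ e' ∈ Aᶜ, c 0 e' = ∑ i ∈ Ico k n, F i := hsAc (c 0)
          rw [hrem, hrem2, div_le_div_iff₀ (hw 0) (hw 1)]
          linarith
    · -- (1,0)
      rcases hP2 with hkm | ⟨i0, ⟨hki0, hi0n⟩, hineq⟩
      · left
        rw [Finset.eq_empty_iff_forall_notMem]
        intro a ha
        rw [Finset.mem_compl, hA, Finset.mem_filter] at ha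
        exact ha ⟨Finset.mem_univ _, by rw [hkm]; exact (g.symm a).isLt⟩
      · right
        have hmem : g ⟨i0, hi0n⟩ ∈ Aᶜ := by
          rw [Finset.mem_compl, hA, Finset.mem_filter]
          intro hmm
          rw [Equiv.symm_apply_apply] at hmm
          have hmm' : i0 < k := hmm.2
          omega
        refine ⟨g ⟨i0, hi0n⟩, hmem, ?_⟩
        have hrem : ∑ e' ∈ Aᶜ \ {g ⟨i0, hi0n⟩}, c 1 e'
            = (∑ i ∈ Ico k n, G i) - G i0 := by
          rw [← Finset.erase_eq, Finset.sum_erase_eq_sub hmem]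
          rw [hsAc (c 1)]
          have : c 1 (g ⟨i0, hi0n⟩) = G i0 := by simp only [hG, dif_pos hi0n]
          rw [this]
        have hrem2 : ∑ e' ∈ A, c 1 e' = ∑ i ∈ range k, G i := hsA (c 1)
        rw [hrem, hrem2, div_le_div_iff₀ (hw 1) (hw 0)]
        linarith
    · -- (1,1)
      rcases Finset.eq_empty_or_nonempty Aᶜ with h | ⟨e, he⟩
      · left; exact h
      · right
        refine ⟨e, he, ?_⟩
        have hsub : ∑ e' ∈ Aᶜ \ {e}, c 1 e' ≤ ∑ e' ∈ Aᶜ, c 1 e' :=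
          Finset.sum_le_sum_of_subset_of_nonneg Finset.sdiff_subset (fun x _ _ => hc 1 x)
        rw [div_le_div_iff₀ (hw 1) (hw 1)]
        exact mul_le_mul_of_nonneg_right hsub (hw 1).le
  · -- cost bound
    intro Y hY
    obtain ⟨hYdisj, hYun⟩ := hY
    have hYu : Y 0 ∪ Y 1 = univ := by
      rw [← hYun]
      ext a
      simp only [Finset.mem_biUnion, Finset.mem_union, Finset.mem_univ, true_and]
      constructor
      · rintro (h | h)
        · exact ⟨0, h⟩
        · exact ⟨1, h⟩
      · rintro ⟨i, hi⟩
        fin_cases i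
        · exact Or.inl hi
        · exact Or.inr hi
    have hd : Disjoint (Y 0) (Y 1) := hYdisj 0 1 (by decide)
    have hmu : (∑ a, min (c 0 a) (c 1 a))
        = (∑ i ∈ range kh, F i) + (∑ i ∈ Ico kh n, G i) := by
      rw [← hsum_univ (fun a => min (c 0 a) (c 1 a))]
      rw [← Finset.sum_range_add_sum_Ico
        (fun i => if hh : i < n then min (c 0 (g ⟨i, hh⟩)) (c 1 (g ⟨i, hh⟩)) else 0) hkhn]
      congr 1
      · apply Finset.sum_congr rfl
        intro i hi
        rw [Finset.mem_range] at hi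
        have hin : i < n := lt_of_lt_of_le hi hkhn
        rw [dif_pos hin]
        have h1 := hcl1 i hi
        simp only [hF, hG, dif_pos hin] at h1 ⊢
        exact min_eq_left h1
      · apply Finset.sum_congr rfl
        intro i hi
        rw [Finset.mem_Ico] at hi
        have hin : i < n := hi.2
        rw [dif_pos hin]
        have h1 := hcl2 i hi.1 hin
        simp only [hF, hG, dif_pos hin] at h1 ⊢
        exact min_eq_right h1
    have hoptY : (∑ i ∈ range kh, F i) + (∑ i ∈ Ico kh n, G i)
        ≤ ∑ i, ∑ e ∈ Y i, c i e := by
      rw [← hmu, Fin.sum_univ_two]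
      have h0 : (∑ a, min (c 0 a) (c 1 a))
          = ∑ a ∈ Y 0, min (c 0 a) (c 1 a) + ∑ a ∈ Y 1, min (c 0 a) (c 1 a) := by
        rw [← Finset.sum_union hd, hYu]
      rw [h0]
      exact add_le_add
        (Finset.sum_le_sum fun a _ => min_le_left _ _)
        (Finset.sum_le_sum fun a _ => min_le_right _ _)
    have hXsum : (∑ i, ∑ e ∈ (![A, Aᶜ]) i, c i e)
        = (∑ i ∈ range k, F i) + (∑ i ∈ Ico k n, G i) := by
      rw [Fin.sum_univ_two]
      simp only [Matrix.cons_val_zero, Matrix.cons_val_one, Matrix.head_cons]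
      rw [hsA (c 0), hsAc (c 1)]
    have hα0 : 0 ≤ max (w 0 / w 1) (w 1 / w 0) :=
      le_trans (div_pos (hw 0) (hw 1)).le (le_max_left _ _)
    have hcoef : 0 ≤ 1 + max (w 0 / w 1) (w 1 / w 0) / 4 := by linarith
    have hαeq : max (w 0) (w 1) / min (w 0) (w 1) = max (w 0 / w 1) (w 1 / w 0) :=
      max_div_min (hw 0) (hw 1)
    calc (∑ i, ∑ e ∈ (![A, Aᶜ]) i, c i e)
        = (∑ i ∈ range k, F i) + (∑ i ∈ Ico k n, G i) := hXsum
      _ ≤ (1 + max (w 0 / w 1) (w 1 / w 0) / 4)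
          * ((∑ i ∈ range kh, F i) + (∑ i ∈ Ico kh n, G i)) := hcost
      _ ≤ (1 + max (w 0 / w 1) (w 1 / w 0) / 4) * (∑ i, ∑ e ∈ Y i, c i e) :=
          mul_le_mul_of_nonneg_left hoptY hcoef
      _ = ((4 + max (w 0) (w 1) / min (w 0) (w 1)) / 4) * (∑ i, ∑ e ∈ Y i, c i e) := by
          rw [hαeq]; ring
end

section
/- For every α ≥ 1 and every δ > 0, there exists an instance of indivisible chores with two agents having weights w_1 = α/(1+α) and w_2 = 1/(1+α) and normalized additive cost functions (c_1(M) = c_2(M) = 1), such that opt(I) > 0 and every WEF1 allocation X satisfies sc(X) ≥ ((4 + α)/4 − δ) · opt(I). -/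
open Finset

lemma finset_fin3_cases (S : Finset (Fin 3)) :
    S = ∅ ∨ S = {0} ∨ S = {1} ∨ S = {2} ∨ S = {0,1} ∨ S = {0,2} ∨ S = {1,2} ∨ S = {0,1,2} := by
  revert S; decide

lemma fne02 : (0:Fin 3) ≠ 2 := by decide
lemma fne12 : (1:Fin 3) ≠ 2 := by decide
lemma fne01 : (0:Fin 3) ≠ 1 := by decide

lemma sum012 (f : Fin 3 → ℝ) : ∑ x ∈ ({0,1,2} : Finset (Fin 3)), f x = f 0 + f 1 + f 2 := by
  rw [show ({0,1,2}:Finset (Fin 3)) = insert 0 (insert 1 {2}) from rfl,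
     Finset.sum_insert (by decide), Finset.sum_insert (by decide), Finset.sum_singleton]; ring

lemma sum01 (f : Fin 3 → ℝ) : ∑ x ∈ ({0,1} : Finset (Fin 3)), f x = f 0 + f 1 := by
  rw [show ({0,1}:Finset (Fin 3)) = insert 0 {1} from rfl,
     Finset.sum_insert (by decide), Finset.sum_singleton]

lemma sum02 (f : Fin 3 → ℝ) : ∑ x ∈ ({0,2} : Finset (Fin 3)), f x = f 0 + f 2 := by
  rw [show ({0,2}:Finset (Fin 3)) = insert 0 {2} from rfl,
     Finset.sum_insert (by decide), Finset.sum_singleton]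

lemma sum12 (f : Fin 3 → ℝ) : ∑ x ∈ ({1,2} : Finset (Fin 3)), f x = f 1 + f 2 := by
  rw [show ({1,2}:Finset (Fin 3)) = insert 1 {2} from rfl,
     Finset.sum_insert (by decide), Finset.sum_singleton]

lemma alloc_snd (Y : Fin 2 → Finset (Fin 3)) (h : IsAllocation Y) : Y 1 = (Y 0)ᶜ := by
  obtain ⟨hd, hu⟩ := h
  ext a
  simp only [Finset.mem_compl]
  constructor
  · intro ha h0
    exact Finset.disjoint_left.mp (hd 0 1 (by decide)) h0 ha
  · intro h0
    have : a ∈ Finset.univ.biUnion Y := hu ▸ Finset.mem_univ a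
    obtain ⟨i, -, hi⟩ := Finset.mem_biUnion.mp this
    fin_cases i
    · exact absurd hi h0
    · exact hi


set_option maxHeartbeats 1000000 in
/-- for every `α ≥ 1` and `δ > 0`, there is a two-agent chores instance with
weights `w₁ = α/(1+α)`, `w₂ = 1/(1+α)` and normalized costs in which the optimal social cost
is positive and every WEF1 allocation has social cost at least `((4+α)/4 - δ)` times it. -/
theorem price_of_WEF1_lower_bound (α δ : ℝ) (hα : 1 ≤ α) (hδ : 0 < δ) :
    ∃ (mm : ℕ) (c : Fin 2 → Fin mm → ℝ) (opt : ℝ),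
      (∀ i e, 0 ≤ c i e) ∧ (∀ i, ∑ e, c i e = 1) ∧
      (∃ Y : Fin 2 → Finset (Fin mm), IsAllocation Y ∧ (∑ i, ∑ e ∈ Y i, c i e) = opt) ∧
      (∀ Y : Fin 2 → Finset (Fin mm), IsAllocation Y → opt ≤ ∑ i, ∑ e ∈ Y i, c i e) ∧
      0 < opt ∧
      (∀ X : Fin 2 → Finset (Fin mm), IsAllocation X →
        IsWEF1 (fun i : Fin 2 => if i = 0 then α / (1 + α) else 1 / (1 + α)) c X →
        ((4 + α) / 4 - δ) * opt ≤ ∑ i, ∑ e ∈ X i, c i e) := by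
  set δ₀ : ℝ := min δ (1/2) with hδ₀def
  have hδ₀pos : 0 < δ₀ := lt_min hδ (by norm_num)
  have hδ₀le : δ₀ ≤ δ := min_le_left _ _
  have hδ₀half : δ₀ ≤ 1/2 := min_le_right _ _
  have hden : (5:ℝ)/2 ≤ 2 + α - δ₀ := by linarith
  have hdenpos : (0:ℝ) < 2 + α - δ₀ := by linarith
  set t : ℝ := 1 / (2 + α - δ₀) with htdef
  have htpos : 0 < t := by positivity
  have ht1 : t * (2 + α - δ₀) = 1 := by
    rw [htdef]; field_simp
  have ht2 : t ≤ 2/5 := by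
    rw [htdef, div_le_iff₀ hdenpos]
    linarith
  have htlow : 1 - 2*t < α * t := by
    nlinarith [mul_pos htpos hδ₀pos]
  have hkey : ((4 + α) / 4 - δ) * (2*t) ≤ 1/2 + t := by
    have h1 : ((4 + α) / 4 - δ) * (2*t) ≤ ((4 + α) / 4 - δ₀) * (2*t) := by
      nlinarith [mul_pos htpos hδ₀pos]
    have h2 : ((4 + α) / 4 - δ₀) * (2*t) ≤ 1/2 + t := by
      nlinarith [mul_pos htpos hδ₀pos]
    linarith
  refine ⟨3, fun i e => if i = 0 then (if e = 2 then 0 else 1/2) else (if e = 2 then 1 - 2*t else t),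
    2*t, ?_, ?_, ?_, ?_, by linarith, ?_⟩
  · intro i e
    fin_cases i <;> fin_cases e <;> simp <;> linarith
  · intro i
    fin_cases i <;> simp [Fin.sum_univ_three] <;> ring
  · refine ⟨![{2}, {0,1}], ⟨by decide, by decide⟩, ?_⟩
    rw [Fin.sum_univ_two]
    simp only [Matrix.cons_val_zero, Matrix.cons_val_one, Matrix.head_cons, sum01,
      Finset.sum_singleton]
    norm_num [fne02, fne12]
    ring
  · intro Y hY
    have h1 := alloc_snd Y hY
    rcases finset_fin3_cases (Y 0) with h|h|h|h|h|h|h|h <;>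
      [ (have h1' : Y 1 = ({0,1,2}:Finset (Fin 3)) := by rw [h1, h]; decide);
        (have h1' : Y 1 = ({1,2}:Finset (Fin 3)) := by rw [h1, h]; decide);
        (have h1' : Y 1 = ({0,2}:Finset (Fin 3)) := by rw [h1, h]; decide);
        (have h1' : Y 1 = ({0,1}:Finset (Fin 3)) := by rw [h1, h]; decide);
        (have h1' : Y 1 = ({2}:Finset (Fin 3)) := by rw [h1, h]; decide);
        (have h1' : Y 1 = ({1}:Finset (Fin 3)) := by rw [h1, h]; decide);
        (have h1' : Y 1 = ({0}:Finset (Fin 3)) := by rw [h1, h]; decide);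
        (have h1' : Y 1 = (∅:Finset (Fin 3)) := by rw [h1, h]; decide)] <;>
      rw [Fin.sum_univ_two, h, h1'] <;>
      norm_num [sum012, sum01, sum02, sum12, fne02, fne12, Finset.sum_singleton] <;>
      linarith
  · intro X hX hW
    have h1 := alloc_snd X hX
    rcases finset_fin3_cases (X 0) with h|h|h|h|h|h|h|h
    · have h1' : X 1 = ({0,1,2}:Finset (Fin 3)) := by rw [h1, h]; decide
      rw [Fin.sum_univ_two, h, h1']
      norm_num [sum012, fne02, fne12]
      linarith
    · have h1' : X 1 = ({1,2}:Finset (Fin 3)) := by rw [h1, h]; decide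
      rw [Fin.sum_univ_two, h, h1']
      norm_num [sum12, fne02, fne12, Finset.sum_singleton]
      linarith
    · have h1' : X 1 = ({0,2}:Finset (Fin 3)) := by rw [h1, h]; decide
      rw [Fin.sum_univ_two, h, h1']
      norm_num [sum02, fne02, fne12, Finset.sum_singleton]
      linarith
    · -- bad case : X 0 = {2}, X 1 = {0,1}: not WEF1, contradiction
      exfalso
      have h1' : X 1 = ({0,1}:Finset (Fin 3)) := by rw [h1, h]; decide
      rcases hW 1 0 with hemp | ⟨e, he, hle⟩
      · rw [h1'] at hemp; exact absurd hemp (by decide)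
      · rw [h1'] at he
        rw [h1', h] at hle
        have hα1 : (0:ℝ) < 1 + α := by linarith
        have hαpos : (0:ℝ) < α := by linarith
        have hne10 : (1:Fin 2) ≠ 0 := by decide
        fin_cases he
        · simp only [show ({0,1}:Finset (Fin 3)) \ {0} = {1} from by decide,
            Finset.sum_singleton] at hle
          norm_num [fne02, fne12, hne10] at hle
          rw [le_div_iff₀ (by positivity : (0:ℝ) < α / (1+α))] at hle
          have heq : t * (1 + α) * (α / (1 + α)) = t * α := by
            field_simp
          rw [heq] at hle
          nlinarith
        · simp only [show ({0,1}:Finset (Fin 3)) \ {1} = {0} from by decide,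
            Finset.sum_singleton] at hle
          norm_num [fne02, fne12, hne10] at hle
          rw [le_div_iff₀ (by positivity : (0:ℝ) < α / (1+α))] at hle
          have heq : t * (1 + α) * (α / (1 + α)) = t * α := by
            field_simp
          rw [heq] at hle
          nlinarith
    · have h1' : X 1 = ({2}:Finset (Fin 3)) := by rw [h1, h]; decide
      rw [Fin.sum_univ_two, h, h1']
      norm_num [sum01, fne02, fne12, Finset.sum_singleton]
      linarith
    · have h1' : X 1 = ({1}:Finset (Fin 3)) := by rw [h1, h]; decide
      rw [Fin.sum_univ_two, h, h1']
      norm_num [sum02, fne02, fne12, Finset.sum_singleton]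
      linarith
    · have h1' : X 1 = ({0}:Finset (Fin 3)) := by rw [h1, h]; decide
      rw [Fin.sum_univ_two, h, h1']
      norm_num [sum12, fne02, fne12, Finset.sum_singleton]
      linarith
    · have h1' : X 1 = (∅:Finset (Fin 3)) := by rw [h1, h]; decide
      rw [Fin.sum_univ_two, h, h1']
      norm_num [sum012, fne02, fne12]
      linarith
end

section
/- Let σ : {1,…,m} → N be a greedy weighted sequence for weights w. Then in the allocation of indivisible goods with additive valuations, every forward-picking allocation for σ is WEF1 for goods. -/
open Finset

/-- Number of occurrences of agent `i` among the first `t` entries of the sequence `σ`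
(with 0-indexed entries, these are the indices `t' < t`). -/
def appearCount {N : Type*} [DecidableEq N] (m : ℕ) (σ : Fin m → N) (i : N) (t : ℕ) : ℕ :=
  (Finset.univ.filter fun t' : Fin m => (t' : ℕ) < t ∧ σ t' = i).card

/-- `s_i(t)` : the weighted number of appearances of agent `i` among the first `t` entries. -/
noncomputable def sVal {N : Type*} [DecidableEq N] (w : N → ℝ) (m : ℕ) (σ : Fin m → N)
    (i : N) (t : ℕ) : ℝ :=
  (appearCount m σ i t : ℝ) / w i

/-- A greedy weighted sequence: each entry `σ(t)` minimizes `s_·(t-1)`, i.e. (with 0-indexed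
entries) the `t`-th entry minimizes the weighted count of appearances among indices `< t`. -/
def IsGreedySeq {N : Type*} [DecidableEq N] (w : N → ℝ) (m : ℕ) (σ : Fin m → N) : Prop :=
  ∀ t : Fin m, ∀ j : N, sVal w m σ (σ t) (t : ℕ) ≤ sVal w m σ j (t : ℕ)

/-- Forward picking for goods: agents pick in the order `σ(1), σ(2), …, σ(m)`, each picking
a maximum-value item among the yet-unallocated items; `π t` is the item picked by `σ t`. -/
def IsForwardPicking {N M : Type*} (v : N → M → ℝ) (m : ℕ) (σ : Fin m → N)
    (π : Fin m ≃ M) : Prop :=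
  ∀ t t' : Fin m, t < t' → v (σ t) (π t') ≤ v (σ t) (π t)

/-- The bundle of agent `i` in the picking-sequence allocation. -/
def allocOf {N M : Type*} [DecidableEq N] [DecidableEq M] (m : ℕ) (σ : Fin m → N)
    (π : Fin m ≃ M) (i : N) : Finset M :=
  (Finset.univ.filter fun t : Fin m => σ t = i).image π

/-- Weighted envy-freeness up to one item, for goods. -/
def IsWEF1Goods {N M : Type*} [DecidableEq M] (w : N → ℝ) (v : N → M → ℝ)
    (X : N → Finset M) : Prop :=
  ∀ i j : N, X j = ∅ ∨ ∃ e ∈ X j,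
    (∑ e' ∈ X j \ {e}, v i e') / w j ≤ (∑ e' ∈ X i, v i e') / w i


/-! ### Auxiliary machinery: clamping, the charging lemma, and rank functions -/

noncomputable def clampR (lo hi z : ℝ) : ℝ := max lo (min hi z)

lemma clampR_mono {lo hi z z' : ℝ} (h : z ≤ z') : clampR lo hi z ≤ clampR lo hi z' :=
  max_le_max le_rfl (min_le_min le_rfl h)

lemma clampR_of_le {lo hi z : ℝ} (h : z ≤ lo) : clampR lo hi z = lo :=
  max_eq_left (le_trans (min_le_right _ _) h)

lemma clampR_of_ge {lo hi z : ℝ} (hlh : lo ≤ hi) (h : hi ≤ z) : clampR lo hi z = hi := by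
  unfold clampR; rw [min_eq_left h]; exact max_eq_right hlh

lemma clampR_le {lo hi z : ℝ} (hlh : lo ≤ hi) : clampR lo hi z ≤ hi :=
  max_le hlh (min_le_left _ _)

lemma clampR_ge {lo hi z : ℝ} : lo ≤ clampR lo hi z := le_max_left _ _

lemma clampR_symm {a b c d : ℝ} (hab : a ≤ b) (hcd : c ≤ d) :
    clampR c d b - clampR c d a = clampR a b d - clampR a b c := by
  unfold clampR
  simp only [max_def, min_def]
  split_ifs <;> linarith

lemma charge {α : Type*} [DecidableEq α] (D A : Finset α)
    (wi wj : ℝ) (hwi : 0 < wi) (hwj : 0 < wj)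
    (y x : α → ℝ) (hx : ∀ u ∈ A, 0 ≤ x u)
    (a c : α → ℕ) (q p : ℕ)
    (ha1 : ∀ t ∈ D, 1 ≤ a t) (haq : ∀ t ∈ D, a t < q)
    (hainj : ∀ t ∈ D, ∀ t' ∈ D, a t = a t' → t = t')
    (hcimg : A.image c = Finset.range p)
    (hcinj : ∀ u ∈ A, ∀ u' ∈ A, c u = c u' → u = u')
    (hgr : ∀ t ∈ D, ∀ u ∈ A, (c u : ℝ)/wi < (a t : ℝ)/wj → y t ≤ x u)
    (hcov : ∀ t ∈ D, (a t : ℝ)/wj ≤ (p : ℝ)/wi) :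
    (∑ t ∈ D, y t)/wj ≤ (∑ u ∈ A, x u)/wi := by
  set len : α → α → ℝ := fun t u =>
    clampR ((c u : ℝ)/wi) (((c u : ℝ)+1)/wi) ((a t : ℝ)/wj)
    - clampR ((c u : ℝ)/wi) (((c u : ℝ)+1)/wi) (((a t : ℝ)-1)/wj) with hlen
  have hmonoj : ∀ n : ℝ, (n-1)/wj ≤ n/wj := fun n => by gcongr <;> linarith
  have hmonoi : ∀ r : ℝ, r/wi ≤ (r+1)/wi := fun r => by gcongr <;> linarith
  have hlen_nonneg : ∀ t u, 0 ≤ len t u := fun t u =>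
    sub_nonneg.mpr (clampR_mono (hmonoj _))
  -- Step A
  have stepA : ∀ t ∈ D, ∑ u ∈ A, len t u = 1/wj := by
    intro t ht
    have h1 : ∑ u ∈ A, len t u = ∑ r ∈ Finset.range p,
        (clampR ((r : ℝ)/wi) (((r : ℝ)+1)/wi) ((a t : ℝ)/wj)
         - clampR ((r : ℝ)/wi) (((r : ℝ)+1)/wi) (((a t : ℝ)-1)/wj)) := by
      rw [← hcimg, Finset.sum_image hcinj]
    rw [h1]
    have h2 : ∀ r ∈ Finset.range p,
        (clampR ((r : ℝ)/wi) (((r : ℝ)+1)/wi) ((a t : ℝ)/wj)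
         - clampR ((r : ℝ)/wi) (((r : ℝ)+1)/wi) (((a t : ℝ)-1)/wj))
        = clampR (((a t : ℝ)-1)/wj) ((a t : ℝ)/wj) ((((r+1 : ℕ)) : ℝ)/wi)
          - clampR (((a t : ℝ)-1)/wj) ((a t : ℝ)/wj) ((r : ℝ)/wi) := by
      intro r _
      rw [clampR_symm (hmonoj _) (hmonoi _)]
      push_cast; ring_nf
    rw [Finset.sum_congr rfl h2, Finset.sum_range_sub
      (fun r : ℕ => clampR (((a t : ℝ)-1)/wj) ((a t : ℝ)/wj) ((r : ℝ)/wi))]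
    have e0 : clampR (((a t : ℝ)-1)/wj) ((a t : ℝ)/wj) (((0:ℕ) : ℝ)/wi)
        = ((a t : ℝ)-1)/wj := by
      apply clampR_of_le
      have : (1:ℝ) ≤ (a t : ℝ) := by exact_mod_cast ha1 t ht
      simp only [Nat.cast_zero, zero_div]
      apply div_nonneg (by linarith) hwj.le
    have ep : clampR (((a t : ℝ)-1)/wj) ((a t : ℝ)/wj) ((p : ℝ)/wi) = (a t : ℝ)/wj :=
      clampR_of_ge (hmonoj _) (hcov t ht)
    rw [e0, ep]
    field_simp; ring
  -- Step C
  have stepC : ∀ u ∈ A, ∑ t ∈ D, len t u ≤ 1/wi := by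
    intro u hu
    set L : ℕ → ℝ := fun n =>
      clampR ((c u : ℝ)/wi) (((c u : ℝ)+1)/wi) ((n : ℝ)/wj)
      - clampR ((c u : ℝ)/wi) (((c u : ℝ)+1)/wi) (((n : ℝ)-1)/wj) with hL
    have h0 : ∑ t ∈ D, len t u = ∑ t ∈ D, L (a t) := rfl
    rw [h0, ← Finset.sum_image hainj]
    have h2 : ∑ n ∈ D.image a, L n ≤ ∑ n ∈ Finset.Ico 1 q, L n := by
      apply Finset.sum_le_sum_of_subset_of_nonneg
      · intro n hn
        obtain ⟨t, ht, rfl⟩ := Finset.mem_image.mp hn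
        exact Finset.mem_Ico.mpr ⟨ha1 t ht, haq t ht⟩
      · intro n _ _
        exact sub_nonneg.mpr (clampR_mono (hmonoj _))
    refine h2.trans ?_
    rw [Finset.sum_Ico_eq_sum_range]
    have h3 : ∀ l ∈ Finset.range (q - 1), L (1 + l) =
        (fun l : ℕ => clampR ((c u : ℝ)/wi) (((c u : ℝ)+1)/wi) ((l : ℝ)/wj)) (l+1)
        - (fun l : ℕ => clampR ((c u : ℝ)/wi) (((c u : ℝ)+1)/wi) ((l : ℝ)/wj)) l := by
      intro l _
      simp only [hL]
      push_cast
      ring_nf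
    rw [Finset.sum_congr rfl h3, Finset.sum_range_sub
      (fun l : ℕ => clampR ((c u : ℝ)/wi) (((c u : ℝ)+1)/wi) ((l : ℝ)/wj))]
    have hb1 : clampR ((c u : ℝ)/wi) (((c u : ℝ)+1)/wi) (((q-1 : ℕ) : ℝ)/wj)
        ≤ ((c u : ℝ)+1)/wi := clampR_le (hmonoi _)
    have hb2 : ((c u : ℝ))/wi ≤ clampR ((c u : ℝ)/wi) (((c u : ℝ)+1)/wi) (((0:ℕ) : ℝ)/wj) :=
      clampR_ge
    have : ((c u : ℝ)+1)/wi - (c u : ℝ)/wi = 1/wi := by field_simp; ring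
    linarith
  -- Step B
  have stepB : ∀ t ∈ D, ∀ u ∈ A, y t * len t u ≤ x u * len t u := by
    intro t ht u hu
    rcases eq_or_lt_of_le (hlen_nonneg t u) with h0 | hpos
    · rw [← h0]; simp
    · have hlt : (c u : ℝ)/wi < (a t : ℝ)/wj := by
        by_contra hcon
        push_neg at hcon
        have e1 : clampR ((c u : ℝ)/wi) (((c u : ℝ)+1)/wi) ((a t : ℝ)/wj)
            = (c u : ℝ)/wi := clampR_of_le hcon
        have e2 : clampR ((c u : ℝ)/wi) (((c u : ℝ)+1)/wi) (((a t : ℝ)-1)/wj)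
            = (c u : ℝ)/wi := clampR_of_le ((hmonoj _).trans hcon)
        simp only [hlen, e1, e2, sub_self, lt_self_iff_false] at hpos
      exact mul_le_mul_of_nonneg_right (hgr t ht u hu hlt) hpos.le
  -- chain
  have key : ∑ t ∈ D, y t * (1/wj) ≤ ∑ u ∈ A, x u * (1/wi) := by
    calc ∑ t ∈ D, y t * (1/wj) = ∑ t ∈ D, y t * ∑ u ∈ A, len t u :=
          Finset.sum_congr rfl (fun t ht => by rw [stepA t ht])
      _ = ∑ t ∈ D, ∑ u ∈ A, y t * len t u :=
          Finset.sum_congr rfl (fun t _ => Finset.mul_sum _ _ _)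
      _ ≤ ∑ t ∈ D, ∑ u ∈ A, x u * len t u :=
          Finset.sum_le_sum (fun t ht => Finset.sum_le_sum (fun u hu => stepB t ht u hu))
      _ = ∑ u ∈ A, ∑ t ∈ D, x u * len t u := Finset.sum_comm
      _ = ∑ u ∈ A, x u * ∑ t ∈ D, len t u :=
          Finset.sum_congr rfl (fun u _ => (Finset.mul_sum _ _ _).symm)
      _ ≤ ∑ u ∈ A, x u * (1/wi) :=
          Finset.sum_le_sum (fun u hu => mul_le_mul_of_nonneg_left (stepC u hu) (hx u hu))
  calc (∑ t ∈ D, y t)/wj = ∑ t ∈ D, y t * (1/wj) := by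
        rw [Finset.sum_div]; simp only [mul_one_div]
    _ ≤ ∑ u ∈ A, x u * (1/wi) := key
    _ = (∑ u ∈ A, x u)/wi := by rw [Finset.sum_div]; simp only [mul_one_div]

lemma rank_lt_card {m : ℕ} (S : Finset (Fin m)) {t : Fin m} (ht : t ∈ S) :
    (S.filter (fun t' => t' < t)).card < S.card := by
  apply Finset.card_lt_card
  rw [Finset.ssubset_iff_of_subset (Finset.filter_subset _ _)]
  exact ⟨t, ht, by simp⟩

lemma rank_strict {m : ℕ} (S : Finset (Fin m)) {t t' : Fin m} (ht : t ∈ S) (h : t < t') :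
    (S.filter (fun u => u < t)).card < (S.filter (fun u => u < t')).card := by
  apply Finset.card_lt_card
  rw [Finset.ssubset_iff_of_subset]
  · exact ⟨t, Finset.mem_filter.mpr ⟨ht, h⟩, by simp⟩
  · intro u hu
    rw [Finset.mem_filter] at *
    exact ⟨hu.1, hu.2.trans h⟩

lemma rank_mono {m : ℕ} (S : Finset (Fin m)) {t t' : Fin m} (h : t ≤ t') :
    (S.filter (fun u => u < t)).card ≤ (S.filter (fun u => u < t')).card :=
  Finset.card_le_card (fun u hu => by
    rw [Finset.mem_filter] at *; exact ⟨hu.1, lt_of_lt_of_le hu.2 h⟩)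

lemma rank_injOn {m : ℕ} (S : Finset (Fin m)) {t t' : Fin m} (ht : t ∈ S) (ht' : t' ∈ S)
    (h : (S.filter (fun u => u < t)).card = (S.filter (fun u => u < t')).card) : t = t' := by
  rcases lt_trichotomy t t' with hlt | heq | hgt
  · exact absurd h (Nat.ne_of_lt (rank_strict S ht hlt))
  · exact heq
  · exact absurd h.symm (Nat.ne_of_lt (rank_strict S ht' hgt))

/-- for goods with additive valuations, every forward-picking allocation for a
greedy weighted sequence is WEF1 for goods. -/
theorem greedy_forward_picking_WEF1_goods
    {N M : Type*} [Fintype N] [Fintype M] [DecidableEq N] [DecidableEq M]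
    (w : N → ℝ) (hw : ∀ i, 0 < w i) (hwsum : ∑ i, w i = 1)
    (v : N → M → ℝ) (hv : ∀ i e, 0 ≤ v i e)
    (m : ℕ) (hm : Fintype.card M = m)
    (σ : Fin m → N) (hσ : IsGreedySeq w m σ)
    (π : Fin m ≃ M) (hπ : IsForwardPicking v m σ π) :
    IsWEF1Goods w v (allocOf m σ π) := by
  intro i j
  classical
  set Tj : Finset (Fin m) := Finset.univ.filter (fun t => σ t = j) with hTj
  set Ti : Finset (Fin m) := Finset.univ.filter (fun t => σ t = i) with hTi
  by_cases hne : Tj = ∅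
  · left
    unfold allocOf
    rw [← hTj, hne, Finset.image_empty]
  have hTjne : Tj.Nonempty := Finset.nonempty_iff_ne_empty.mpr hne
  set t₀ := Tj.min' hTjne with ht₀
  right
  refine ⟨π t₀, ?_, ?_⟩
  · show π t₀ ∈ (Finset.univ.filter fun t : Fin m => σ t = j).image π
    rw [← hTj]
    exact Finset.mem_image_of_mem π (Tj.min'_mem hTjne)
  -- rewrite bundle sums as sums over pick times
  have hXj : allocOf m σ π j \ {π t₀} = (Tj.erase t₀).image π := by
    unfold allocOf
    rw [← hTj, Finset.sdiff_singleton_eq_erase, ← Finset.image_erase π.injective]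
  have hXi : allocOf m σ π i = Ti.image π := by unfold allocOf; rw [← hTi]
  rw [hXj, hXi,
    Finset.sum_image (fun a _ b _ h => π.injective h),
    Finset.sum_image (fun a _ b _ h => π.injective h)]
  -- rank functions
  set a : Fin m → ℕ := fun t => (Tj.filter (fun u => u < t)).card with ha
  set c : Fin m → ℕ := fun t => (Ti.filter (fun u => u < t)).card with hc
  -- appearCount in terms of ranks
  have happ : ∀ (k : N) (S : Finset (Fin m)) (t : Fin m),
      S = Finset.univ.filter (fun t' => σ t' = k) →
      appearCount m σ k (t : ℕ) = (S.filter (fun u => u < t)).card := by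
    intro k S t hS
    unfold appearCount
    rw [hS, Finset.filter_filter]
    congr 1
    ext u
    simp only [Finset.mem_filter, Finset.mem_univ, true_and, Fin.lt_def]
    exact and_comm
  -- greedy inequality at times in Tj
  have hgreedy : ∀ t ∈ Tj, ((a t : ℝ)) / w j ≤ ((c t : ℝ)) / w i := by
    intro t ht
    have hσt : σ t = j := (Finset.mem_filter.mp ht).2
    have := hσ t i
    rw [hσt] at this
    unfold sVal at this
    rwa [happ j Tj t hTj, happ i Ti t hTi] at this
  -- apply the charging lemma
  have main := charge (Tj.erase t₀) Ti (w i) (w j) (hw i) (hw j)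
    (fun t => v i (π t)) (fun t => v i (π t))
    (fun u _ => hv i (π u)) a c Tj.card Ti.card
    ?_ ?_ ?_ ?_ ?_ ?_ ?_
  · exact main
  · -- ha1
    intro t ht
    have htTj : t ∈ Tj := Finset.mem_of_mem_erase ht
    have ht0lt : t₀ < t :=
      lt_of_le_of_ne (Tj.min'_le t htTj) (Ne.symm (Finset.ne_of_mem_erase ht))
    have : t₀ ∈ Tj.filter (fun u => u < t) :=
      Finset.mem_filter.mpr ⟨Tj.min'_mem hTjne, ht0lt⟩
    exact Finset.card_pos.mpr ⟨t₀, this⟩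
  · -- haq
    intro t ht
    exact rank_lt_card Tj (Finset.mem_of_mem_erase ht)
  · -- hainj
    intro t ht t' ht' h
    exact rank_injOn Tj (Finset.mem_of_mem_erase ht) (Finset.mem_of_mem_erase ht') h
  · -- hcimg
    have hinj : ∀ u ∈ Ti, ∀ u' ∈ Ti, c u = c u' → u = u' :=
      fun u hu u' hu' h => rank_injOn Ti hu hu' h
    apply Finset.eq_of_subset_of_card_le
    · intro r hr
      obtain ⟨u, hu, rfl⟩ := Finset.mem_image.mp hr
      exact Finset.mem_range.mpr (rank_lt_card Ti hu)
    · rw [Finset.card_range, Finset.card_image_of_injOn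
        (fun u hu u' hu' h => hinj u hu u' hu' h)]
  · -- hcinj
    exact fun u hu u' hu' h => rank_injOn Ti hu hu' h
  · -- hgr
    intro t ht u hu hlt
    have htTj : t ∈ Tj := Finset.mem_of_mem_erase ht
    have h1 : ((c u : ℝ)) / w i < ((c t : ℝ)) / w i :=
      lt_of_lt_of_le hlt (hgreedy t htTj)
    have h2 : c u < c t := by
      have := (div_lt_div_iff_of_pos_right (hw i)).mp h1
      exact_mod_cast this
    have hut : u < t := by
      by_contra hcon
      push_neg at hcon
      exact absurd (rank_mono Ti hcon) (Nat.not_le_of_lt h2)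
    have hσu : σ u = i := (Finset.mem_filter.mp hu).2
    have := hπ u t hut
    rwa [hσu] at this
  · -- hcov
    intro t ht
    refine (hgreedy t (Finset.mem_of_mem_erase ht)).trans ?_
    have hle : (c t : ℝ) ≤ (Ti.card : ℝ) := by
      exact_mod_cast Finset.card_le_card (Finset.filter_subset _ _)
    exact div_le_div_of_nonneg_right hle (hw i).le
end

section
/- For the allocation of indivisible chores with weighted agents and additive cost functions, every WEF1 allocation is WPROP1. -/
open Finset

/-- Weighted proportionality up to one item, for chores. -/
def IsWPROP1 {N M : Type*} [Fintype M] [DecidableEq M] (w : N → ℝ) (c : N → M → ℝ)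
    (X : N → Finset M) : Prop :=
  ∀ i : N, X i = ∅ ∨ ∃ e ∈ X i,
    (∑ e' ∈ X i \ {e}, c i e') ≤ w i * ∑ e', c i e'

/-- for chores with weighted agents and additive costs, every WEF1 allocation
is WPROP1. -/
theorem WEF1_implies_WPROP1
    {N M : Type*} [Fintype N] [Fintype M] [DecidableEq N] [DecidableEq M]
    (w : N → ℝ) (hw : ∀ i, 0 < w i) (hwsum : ∑ i, w i = 1)
    (c : N → M → ℝ) (hc : ∀ i e, 0 ≤ c i e)
    (X : N → Finset M) (hX : IsAllocation X) (hwef1 : IsWEF1 w c X) :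
    IsWPROP1 w c X := by
  intro i
  by_cases hne : X i = ∅
  · exact Or.inl hne
  right
  obtain ⟨eStar, heStar, hmax⟩ := Finset.exists_max_image (X i) (c i)
    (Finset.nonempty_of_ne_empty hne)
  refine ⟨eStar, heStar, ?_⟩
  -- For each j, the reduced bundle cost times w j is at most w i times cost of X j
  have key : ∀ j : N, (∑ e' ∈ X i \ {eStar}, c i e') * w j ≤ w i * ∑ e' ∈ X j, c i e' := by
    intro j
    rcases hwef1 i j with h | ⟨e, he, hineq⟩
    · exact absurd h hne
    have h1 : (∑ e' ∈ X i \ {eStar}, c i e') ≤ ∑ e' ∈ X i \ {e}, c i e' := by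
      have hs : ∀ f ∈ X i, (∑ e' ∈ X i \ {f}, c i e') = (∑ e' ∈ X i, c i e') - c i f := by
        intro f hf
        rw [Finset.sdiff_singleton_eq_erase, ← Finset.add_sum_erase _ _ hf]
        ring
      rw [hs eStar heStar, hs e he]
      linarith [hmax e he]
    have h2 : (∑ e' ∈ X i \ {e}, c i e') / w i ≤ (∑ e' ∈ X j, c i e') / w j := hineq
    rw [div_le_div_iff₀ (hw i) (hw j)] at h2
    calc (∑ e' ∈ X i \ {eStar}, c i e') * w j ≤ (∑ e' ∈ X i \ {e}, c i e') * w j :=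
          mul_le_mul_of_nonneg_right h1 (hw j).le
      _ ≤ (∑ e' ∈ X j, c i e') * w i := h2
      _ = w i * ∑ e' ∈ X j, c i e' := mul_comm _ _
  have hsum := Finset.sum_le_sum (fun j (_ : j ∈ Finset.univ) => key j)
  rw [← Finset.mul_sum, ← Finset.mul_sum, hwsum, mul_one] at hsum
  have htot : (∑ j, ∑ e' ∈ X j, c i e') = ∑ e', c i e' := by
    rw [← Finset.sum_biUnion, hX.2]
    intro a _ b _ hab
    exact hX.1 a b hab
  rw [htot] at hsum
  exact hsum
end

section
/- For the allocation of indivisible chores with weighted agents and additive cost functions, if an allocation X is WEF1, then for every agent i it holds that c_i(X_i) ≤ (2 − w_i) · APS_i; in particular, X is (2 − min_{j∈N} w_j)-APS, i.e., c_i(X_i) ≤ (2 − min_{j∈N} w_j) · APS_i for all i. -/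
open Finset

/-- The AnyPrice Share of agent `i` for chores: the supremum over reward vectors `r ≥ 0`
with total reward `c_i(M)` of the least cost of a bundle whose reward is at least
`w_i · c_i(M)`. -/
noncomputable def APS {N M : Type*} [Fintype M] (w : N → ℝ) (c : N → M → ℝ) (i : N) : ℝ :=
  sSup { v : ℝ | ∃ r : M → ℝ, (∀ e, 0 ≤ r e) ∧ (∑ e, r e) = (∑ e, c i e) ∧
    v = sInf { u : ℝ | ∃ S : Finset M,
      w i * (∑ e, c i e) ≤ (∑ e ∈ S, r e) ∧ u = ∑ e ∈ S, c i e } }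

lemma aps_bddAbove {N M : Type*} [Fintype M] (w : N → ℝ) (c : N → M → ℝ) (i : N)
    (hw1 : w i ≤ 1) (hc : ∀ e, 0 ≤ c i e) :
    BddAbove { v : ℝ | ∃ r : M → ℝ, (∀ e, 0 ≤ r e) ∧ (∑ e, r e) = (∑ e, c i e) ∧
    v = sInf { u : ℝ | ∃ S : Finset M,
      w i * (∑ e, c i e) ≤ (∑ e ∈ S, r e) ∧ u = ∑ e ∈ S, c i e } } := by
  refine ⟨∑ e, c i e, ?_⟩
  rintro v ⟨r, hr0, hrsum, rfl⟩
  have hC0 : 0 ≤ ∑ e, c i e := Finset.sum_nonneg fun e _ => hc e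
  have hmem : (∑ e, c i e) ∈ { u : ℝ | ∃ S : Finset M,
      w i * (∑ e, c i e) ≤ (∑ e ∈ S, r e) ∧ u = ∑ e ∈ S, c i e } :=
    ⟨Finset.univ, by rw [hrsum]; nlinarith, rfl⟩
  exact csInf_le ⟨0, by rintro u ⟨S, _, rfl⟩; exact Finset.sum_nonneg fun e _ => hc e⟩ hmem

lemma aps_ge_share {N M : Type*} [Fintype M] (w : N → ℝ) (c : N → M → ℝ) (i : N)
    (hw1 : w i ≤ 1) (hc : ∀ e, 0 ≤ c i e) :
    w i * (∑ e, c i e) ≤ APS w c i := by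
  have hbdd := aps_bddAbove w c i hw1 hc
  have hmem : sInf { u : ℝ | ∃ S : Finset M,
      w i * (∑ e, c i e) ≤ (∑ e ∈ S, c i e) ∧ u = ∑ e ∈ S, c i e } ∈
      { v : ℝ | ∃ r : M → ℝ, (∀ e, 0 ≤ r e) ∧ (∑ e, r e) = (∑ e, c i e) ∧
        v = sInf { u : ℝ | ∃ S : Finset M,
          w i * (∑ e, c i e) ≤ (∑ e ∈ S, r e) ∧ u = ∑ e ∈ S, c i e } } :=
    ⟨c i, fun e => hc e, rfl, rfl⟩
  refine le_trans ?_ (le_csSup hbdd hmem)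
  refine le_csInf ⟨∑ e, c i e, Finset.univ, ?_, rfl⟩ ?_
  · have hC0 : 0 ≤ ∑ e, c i e := Finset.sum_nonneg fun e _ => hc e
    nlinarith
  · rintro u ⟨S, hS, rfl⟩
    exact hS

lemma aps_ge_item {N M : Type*} [Fintype M] [DecidableEq M]
    (w : N → ℝ) (c : N → M → ℝ) (i : N)
    (hw0 : 0 < w i) (hw1 : w i ≤ 1) (hc : ∀ e, 0 ≤ c i e)
    (hCpos : 0 < ∑ e, c i e) (e0 : M) :
    c i e0 ≤ APS w c i := by
  have hbdd := aps_bddAbove w c i hw1 hc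
  set r : M → ℝ := fun e => if e = e0 then (∑ e, c i e) else 0 with hr
  have hrsum : (∑ e, r e) = ∑ e, c i e := by
    simp [hr]
  have hmem : sInf { u : ℝ | ∃ S : Finset M,
      w i * (∑ e, c i e) ≤ (∑ e ∈ S, r e) ∧ u = ∑ e ∈ S, c i e } ∈
      { v : ℝ | ∃ r : M → ℝ, (∀ e, 0 ≤ r e) ∧ (∑ e, r e) = (∑ e, c i e) ∧
        v = sInf { u : ℝ | ∃ S : Finset M,
          w i * (∑ e, c i e) ≤ (∑ e ∈ S, r e) ∧ u = ∑ e ∈ S, c i e } } := by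
    refine ⟨r, fun e => ?_, hrsum, rfl⟩
    · simp only [hr]
      split <;> [exact le_of_lt hCpos; exact le_refl 0]
  refine le_trans ?_ (le_csSup hbdd hmem)
  refine le_csInf ⟨c i e0, {e0}, ?_, by simp⟩ ?_
  · simp [hr]
    nlinarith
  · rintro u ⟨S, hS, rfl⟩
    have he0S : e0 ∈ S := by
      by_contra h
      have : (∑ e ∈ S, r e) = 0 := by
        apply Finset.sum_eq_zero
        intro e he
        simp [hr]
        intro heq
        exact absurd (heq ▸ he) h
      rw [this] at hS
      nlinarith
    exact Finset.single_le_sum (fun e _ => hc e) he0S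
/-- every WEF1 allocation of chores gives every agent `i` cost at most
`(2 - w_i) · APS_i`; in particular it is `(2 - min_j w_j)`-APS. -/
theorem WEF1_implies_approx_APS
    {N M : Type*} [Fintype N] [Fintype M] [DecidableEq N] [DecidableEq M] [Nonempty N]
    (w : N → ℝ) (hw : ∀ i, 0 < w i) (hwsum : ∑ i, w i = 1)
    (c : N → M → ℝ) (hc : ∀ i e, 0 ≤ c i e)
    (X : N → Finset M) (hX : IsAllocation X) (hwef1 : IsWEF1 w c X) :
    (∀ i : N, (∑ e ∈ X i, c i e) ≤ (2 - w i) * APS w c i) ∧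
    (∀ i : N, (∑ e ∈ X i, c i e) ≤
      (2 - Finset.univ.inf' Finset.univ_nonempty w) * APS w c i) := by
  have hw1 : ∀ i : N, w i ≤ 1 := by
    intro i
    calc w i ≤ ∑ j, w j := Finset.single_le_sum (fun j _ => (hw j).le) (mem_univ i)
    _ = 1 := hwsum
  have hA1 : ∀ i : N, w i * (∑ e, c i e) ≤ APS w c i :=
    fun i => aps_ge_share w c i (hw1 i) (hc i)
  have hA0 : ∀ i : N, 0 ≤ APS w c i := by
    intro i
    refine le_trans ?_ (hA1 i)
    have : 0 ≤ ∑ e, c i e := Finset.sum_nonneg fun e _ => hc i e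
    nlinarith [hw i]
  have hmain : ∀ i : N, (∑ e ∈ X i, c i e) ≤ (2 - w i) * APS w c i := by
    intro i
    have hC0 : 0 ≤ ∑ e, c i e := Finset.sum_nonneg fun e _ => hc i e
    rcases eq_or_lt_of_le hC0 with hCz | hCpos
    · -- total cost is zero
      have hB : (∑ e ∈ X i, c i e) ≤ ∑ e, c i e :=
        Finset.sum_le_sum_of_subset_of_nonneg (Finset.subset_univ _) (fun e _ _ => hc i e)
      nlinarith [hA0 i, hw1 i, hw i]
    · by_cases hXi : X i = ∅
      · rw [hXi]
        simp only [Finset.sum_empty]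
        nlinarith [hA0 i, hw1 i]
      · have hkey : ∀ j : N, j ≠ i →
            w j * ((∑ e ∈ X i, c i e) - APS w c i) ≤ w i * (∑ e ∈ X j, c i e) := by
          intro j _
          rcases hwef1 i j with h | ⟨e, he, hle⟩
          · exact absurd h hXi
          · have hsub : {e} ⊆ X i := Finset.singleton_subset_iff.2 he
            have hsum : ∑ e' ∈ X i \ {e}, c i e' = (∑ e' ∈ X i, c i e') - c i e := by
              rw [Finset.sum_sdiff_eq_sub hsub, Finset.sum_singleton]
            have hdiv := (div_le_div_iff₀ (hw i) (hw j)).1 hle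
            rw [hsum] at hdiv
            have hce : c i e ≤ APS w c i := aps_ge_item w c i (hw i) (hw1 i) (hc i) hCpos e
            nlinarith [hw j, hw i]
        have hpart : ∑ j, ∑ e ∈ X j, c i e = ∑ e, c i e := by
          rw [← Finset.sum_biUnion (fun a _ b _ hab => hX.1 a b hab), hX.2]
        have hsumkey : (∑ j ∈ Finset.univ.erase i, w j) * ((∑ e ∈ X i, c i e) - APS w c i)
            ≤ w i * (∑ j ∈ Finset.univ.erase i, ∑ e ∈ X j, c i e) := by
          rw [Finset.sum_mul, Finset.mul_sum]
          exact Finset.sum_le_sum fun j hj => hkey j (Finset.ne_of_mem_erase hj)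
        have hw_erase : (∑ j ∈ Finset.univ.erase i, w j) + w i = 1 := by
          rw [Finset.sum_erase_add _ _ (mem_univ i), hwsum]
        have hX_erase : (∑ j ∈ Finset.univ.erase i, ∑ e ∈ X j, c i e) + (∑ e ∈ X i, c i e)
            = ∑ e, c i e := by
          rw [Finset.sum_erase_add _ _ (mem_univ i), hpart]
        have hs : (∑ j ∈ Finset.univ.erase i, w j) = 1 - w i := by linarith
        have ht : (∑ j ∈ Finset.univ.erase i, ∑ e ∈ X j, c i e)
            = (∑ e, c i e) - (∑ e ∈ X i, c i e) := by linarith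
        rw [hs, ht] at hsumkey
        nlinarith [hA1 i, hw i, hsumkey]
  refine ⟨hmain, fun i => ?_⟩
  have hinf : Finset.univ.inf' Finset.univ_nonempty w ≤ w i :=
    Finset.inf'_le _ (mem_univ i)
  nlinarith [hmain i, hA0 i]
end

section
/- For every γ ≥ 1, there exists an instance of indivisible chores with three agents of equal weight 1/3 and identical additive cost functions, together with an allocation X satisfying c_i(X_i) ≤ APS_i for every agent i, such that X fails γ-approximate EF1: there exist agents i, j with X_i ≠ ∅ such that for every e ∈ X_i, c_i(X_i − e) > γ · c_i(X_j). -/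
open Finset

/-- for every `γ ≥ 1` there is a chores instance with three agents of equal
weight `1/3` and identical additive costs, and an APS allocation (each agent's cost is at
most her AnyPrice Share) that fails `γ`-approximate EF1. -/
theorem APS_not_imply_approx_EF1 (γ : ℝ) (hγ : 1 ≤ γ) :
    ∃ (mm : ℕ) (c : Fin 3 → Fin mm → ℝ) (X : Fin 3 → Finset (Fin mm)),
      (∀ i e, 0 ≤ c i e) ∧
      (∀ i i' : Fin 3, c i = c i') ∧
      IsAllocation X ∧
      (∀ i : Fin 3, (∑ e ∈ X i, c i e) ≤ APS (fun _ : Fin 3 => (1 : ℝ) / 3) c i) ∧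
      ∃ i j : Fin 3, X i ≠ ∅ ∧ ∀ e ∈ X i,
        γ * (∑ e' ∈ X j, c i e') < ∑ e' ∈ X i \ {e}, c i e' := by
  have hγ0 : (0:ℝ) < γ := lt_of_lt_of_le one_pos hγ
  set b : ℝ := 1/(2*γ) with hbdef
  have hb0 : 0 < b := by positivity
  have hb2 : b ≤ 1/2 := by
    rw [hbdef, div_le_div_iff₀ (by positivity) (by norm_num)]
    linarith
  set cst : Fin 5 → ℝ := fun e => if e = 4 then b else 1 with hcst
  have hcnn : ∀ e, 0 ≤ cst e := by
    intro e; simp only [hcst]; split <;> [exact le_of_lt hb0; norm_num]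
  have hc4 : cst 4 = b := if_pos rfl
  have hsumc : ∑ e, cst e = 4 + b := by
    simp [hcst, Fin.sum_univ_five]
    norm_num
  refine ⟨5, fun _ => cst, fun i => if i = 0 then {0,1} else if i = 1 then {2,3} else {4},
    fun _ e => hcnn e, fun i i' => rfl, ⟨by decide, by decide⟩, ?_, ?_⟩
  · -- APS bound
    have hT : (0:ℝ) < 4 + b := by linarith
    have h2aps : (2:ℝ) ≤ APS (fun _ : Fin 3 => (1 : ℝ) / 3) (fun _ => cst) 0 := by
      set r : Fin 5 → ℝ := fun e => if e = 4 then 0 else (4+b)/4 with hr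
      have hrnn : ∀ e, 0 ≤ r e := by
        intro e; simp only [hr]; split <;> positivity
      have hrsum : ∑ e, r e = ∑ e, cst e := by
        rw [hsumc]; simp [hr, Fin.sum_univ_five]; ring
      have hbddA : BddAbove {v : ℝ | ∃ rr : Fin 5 → ℝ, (∀ e, 0 ≤ rr e) ∧
          (∑ e, rr e) = (∑ e, cst e) ∧
          v = sInf {u : ℝ | ∃ S : Finset (Fin 5),
            (1:ℝ)/3 * (∑ e, cst e) ≤ (∑ e ∈ S, rr e) ∧ u = ∑ e ∈ S, cst e}} := by
        refine ⟨4 + b, ?_⟩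
        rintro v ⟨rr, hrr0, hrrsum, rfl⟩
        refine csInf_le ⟨0, ?_⟩ ⟨Finset.univ, ?_, by rw [hsumc]⟩
        · rintro u ⟨S, -, rfl⟩
          exact Finset.sum_nonneg fun e _ => hcnn e
        · rw [show (∑ e ∈ Finset.univ, rr e) = ∑ e, rr e from rfl, hrrsum, hsumc]
          linarith
      have hInf : (2:ℝ) ≤ sInf {u : ℝ | ∃ S : Finset (Fin 5),
          (1:ℝ)/3 * (∑ e, cst e) ≤ (∑ e ∈ S, r e) ∧ u = ∑ e ∈ S, cst e} := by
        refine le_csInf ⟨4 + b, Finset.univ, ?_, by rw [hsumc]⟩ ?_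
        · rw [show (∑ e ∈ Finset.univ, r e) = ∑ e, r e from rfl, hrsum, hsumc]
          linarith
        · rintro u ⟨S, hS, rfl⟩
          have hr4 : r 4 = 0 := if_pos rfl
          have hre : ∑ e ∈ S.erase 4, r e = ∑ e ∈ S, r e := Finset.sum_erase _ hr4
          have hconst : ∑ e ∈ S.erase 4, r e = ((S.erase 4).card : ℝ) * ((4+b)/4) := by
            rw [Finset.sum_congr rfl
              (fun e heS => show r e = (4+b)/4 from if_neg (Finset.ne_of_mem_erase heS)),
              Finset.sum_const, nsmul_eq_mul]
          rw [hsumc] at hS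
          have hcardR : (4:ℝ)/3 ≤ ((S.erase 4).card : ℝ) := by
            have h' : (1:ℝ)/3 * (4+b) ≤ ((S.erase 4).card : ℝ) * ((4+b)/4) := by
              rw [hconst] at hre; linarith [hre ▸ hS]
            nlinarith
          have hcard2 : (2:ℝ) ≤ ((S.erase 4).card : ℝ) := by
            by_contra h
            push_neg at h
            have : (S.erase 4).card < 2 := by exact_mod_cast h
            have : ((S.erase 4).card : ℝ) ≤ 1 := by
              exact_mod_cast Nat.lt_succ_iff.mp this
            linarith
          have h1 : ∑ e ∈ S.erase 4, cst e = ((S.erase 4).card : ℝ) := by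
            rw [Finset.sum_congr rfl
              (fun e heS => show cst e = 1 from if_neg (Finset.ne_of_mem_erase heS)),
              Finset.sum_const, nsmul_eq_mul, mul_one]
          have h2 : ∑ e ∈ S.erase 4, cst e ≤ ∑ e ∈ S, cst e :=
            Finset.sum_le_sum_of_subset_of_nonneg (Finset.erase_subset _ _)
              (fun e _ _ => hcnn e)
          linarith
      have hmem : sInf {u : ℝ | ∃ S : Finset (Fin 5),
          (1:ℝ)/3 * (∑ e, cst e) ≤ (∑ e ∈ S, r e) ∧ u = ∑ e ∈ S, cst e} ∈
          {v : ℝ | ∃ rr : Fin 5 → ℝ, (∀ e, 0 ≤ rr e) ∧ (∑ e, rr e) = (∑ e, cst e) ∧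
          v = sInf {u : ℝ | ∃ S : Finset (Fin 5),
            (1:ℝ)/3 * (∑ e, cst e) ≤ (∑ e ∈ S, rr e) ∧ u = ∑ e ∈ S, cst e}} :=
        ⟨r, hrnn, hrsum, rfl⟩
      exact le_trans hInf (le_csSup hbddA hmem)
    intro i
    refine le_trans ?_ h2aps
    fin_cases i <;> simp [hcst] <;> norm_num
    linarith
  · refine ⟨0, 2, by decide, ?_⟩
    intro e he
    have hgb : γ * b = 1/2 := by
      rw [hbdef, mul_one_div, div_eq_div_iff (by positivity) (by norm_num)]
      ring
    have hc0 : cst 0 = 1 := if_neg (by decide)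
    have hc1 : cst 1 = 1 := if_neg (by decide)
    fin_cases he <;>
      simp only [if_pos rfl, show ((2:Fin 3) = 0) = False by simp, show ((2:Fin 3) = 1) = False by simp,
        if_neg, ite_false] <;>
      simp [Finset.sum_singleton, hc4, hc0, hc1] <;> linarith
end
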